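/- arXiv:1811.07300 — 3 statements merged into one kernel-verified Lean document; each statement's English description precedes it below -/
import Mathlib

section
/- Let N ≥ 2 be a natural number, R a natural number, x_1,...,x_R ∈ ℝ², and (a_n) complex numbers indexed by n ∈ ℤ². Let 0 < Δ ≤ 1/2 and define K(Δ) = sup over α ∈ ℝ² of the number of r ∈ {1,...,R} such that min_{z ∈ ℤ²} ‖x_r − α − z‖₂ ≤ Δ^{1/2}. Then there is an absolute constant C such that ∑_{r=1}^{R} |∑_{n ∈ ℤ², ‖n‖₂² ≤ N} a_n e(n·x_r)|² ≤ C · K(Δ) · (N + Δ^{-1}) · ∑_{‖n‖₂² ≤ N} |a_n|². -/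
/-
Gallagher's method. With b_n = a_n / (ŵ(n₁) ŵ(n₂)), where ŵ(k) = ∫_{-ρ}^{ρ} e(kt) dt, the
exponential sum at x_r is the integral of g(y) = ∑ b_n e(n·y) over the square of half-side ρ
centred at x_r reduced mod ℤ². Cauchy–Schwarz bounds its square by (2ρ)² ∫ |g|² over that square.
All squares lie in [-1/2, 3/2]², and since √2 ρ ≤ √Δ every point lies in at most K of them, so the
total is at most 4ρ² K ∫_{[-1/2, 3/2]²} |g|² = 16 ρ² K ∑ |b_n|² by orthogonality. Finally
ŵ(k) = 2ρ sinc(2πkρ) ≥ ρ whenever 4|k|ρ ≤ 1, and ρ = min(√(Δ/2), 1/(4√N)) has ρ⁻² ≤ 16 (N + Δ⁻¹).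
-/

open Complex Real MeasureTheory Set Finset ComplexConjugate

namespace MeasureTheory

theorem norm_setIntegral_sq_le {α E : Type*} [MeasurableSpace α] [NormedAddCommGroup E]
    [NormedSpace ℝ E] {μ : Measure α} {s : Set α} (hs : μ s ≠ ⊤) {f : α → E}
    (hf : IntegrableOn f s μ) (hf2 : IntegrableOn (fun x => ‖f x‖ ^ 2) s μ) :
    ‖∫ x in s, f x ∂μ‖ ^ 2 ≤ μ.real s * ∫ x in s, ‖f x‖ ^ 2 ∂μ := by
  rcases eq_or_ne (μ s) 0 with h0 | h0
  · simp [Measure.restrict_eq_zero.2 h0]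
  have hm : 0 < μ.real s := ENNReal.toReal_pos h0 hs
  have jensen := (Even.convexOn_pow even_two).map_set_average_le (continuousOn_pow 2)
    isClosed_univ h0 hs (by simp) hf.norm hf2
  simp only [setAverage_eq, smul_eq_mul] at jensen
  calc ‖∫ x in s, f x ∂μ‖ ^ 2 ≤ (∫ x in s, ‖f x‖ ∂μ) ^ 2 :=
        pow_le_pow_left₀ (norm_nonneg _) (norm_integral_le_integral_norm _) 2
    _ = μ.real s ^ 2 * ((μ.real s)⁻¹ * ∫ x in s, ‖f x‖ ∂μ) ^ 2 := by field_simp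
    _ ≤ μ.real s ^ 2 * ((μ.real s)⁻¹ * ∫ x in s, ‖f x‖ ^ 2 ∂μ) := by gcongr
    _ = μ.real s * ∫ x in s, ‖f x‖ ^ 2 ∂μ := by field_simp

open scoped Classical in
theorem sum_setIntegral_le_card_mul_setIntegral {ι α : Type*} [MeasurableSpace α]
    {μ : Measure α} (s : Finset ι) {S : ι → Set α} {B : Set α} (hS : ∀ i ∈ s, MeasurableSet (S i))
    (hSB : ∀ i ∈ s, S i ⊆ B) {K : ℕ} (hK : ∀ y ∈ B, #{i ∈ s | y ∈ S i} ≤ K) {G : α → ℝ}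
    (hG0 : ∀ y ∈ B, 0 ≤ G y) (hG : IntegrableOn G B μ) (hB : MeasurableSet B) :
    ∑ i ∈ s, ∫ y in S i, G y ∂μ ≤ K * ∫ y in B, G y ∂μ := by
  have hind : ∀ i ∈ s, ∫ y in S i, G y ∂μ = ∫ y in B, (S i).indicator G y ∂μ := fun i hi => by
    rw [setIntegral_indicator (hS i hi), inter_eq_self_of_subset_right (hSB i hi)]
  rw [sum_congr rfl hind, ← integral_finsetSum _ fun i hi => (hG.indicator (hS i hi)),
    ← integral_const_mul]
  refine setIntegral_mono_on (integrable_finsetSum _ fun i hi => hG.indicator (hS i hi))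
    (hG.const_mul _) hB fun y hy => ?_
  calc ∑ i ∈ s, (S i).indicator G y = #{i ∈ s | y ∈ S i} * G y := by
        simp only [indicator_apply, ← sum_filter, sum_const, nsmul_eq_mul]
    _ ≤ K * G y := by gcongr; exacts [hG0 y hy, hK y hy]

end MeasureTheory

theorem Continuous.integrableOn_Ioc_prod_Ioc {E : Type*} [NormedAddCommGroup E] {f : ℝ × ℝ → E}
    (hf : Continuous f) (a b c d : ℝ) : IntegrableOn f (Ioc a b ×ˢ Ioc c d) :=
  (hf.continuousOn.integrableOn_compact (isCompact_Icc.prod isCompact_Icc)).mono_set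
    (prod_mono Ioc_subset_Icc_self Ioc_subset_Icc_self)

namespace Real

theorem two_div_pi_le_sinc {x : ℝ} (hx : |x| ≤ π / 2) : 2 / π ≤ sinc x := by
  wlog h0 : 0 ≤ x generalizing x
  · simpa using this (x := -x) (by rwa [abs_neg]) (by linarith)
  rcases h0.eq_or_lt with rfl | hpos
  · simpa using (div_le_one pi_pos).2 two_le_pi
  · rw [sinc_of_ne_zero hpos.ne', le_div_iff₀ hpos]
    exact mul_le_sin h0 (by rwa [abs_of_nonneg h0] at hx)

end Real

namespace LargeSieve

noncomputable def e (t : ℝ) : ℂ := Complex.exp (2 * π * I * t)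

lemma e_add (s t : ℝ) : e (s + t) = e s * e t := by
  simp only [e, ← Complex.exp_add]; push_cast; ring_nf

lemma e_intCast (k : ℤ) : e k = 1 := by
  rw [e, ← Complex.exp_int_mul_two_pi_mul_I k]; push_cast; ring_nf

lemma conj_e (t : ℝ) : conj (e t) = e (-t) := by
  rw [e, ← Complex.exp_conj]; simp [e, map_ofNat]

@[fun_prop]
lemma continuous_e : Continuous e := by unfold e; fun_prop

noncomputable def weight (k : ℤ) (ρ : ℝ) : ℝ := 2 * ρ * sinc (2 * π * k * ρ)

lemma integral_e_mul_eq_weight (k : ℤ) (ρ : ℝ) :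
    ∫ t in -ρ..ρ, e (k * t) = weight k ρ := by
  rcases eq_or_ne k 0 with rfl | hk
  · simp [weight, e, two_mul]
  have hc : 2 * π * k ≠ 0 := by simp [pi_ne_zero, hk]
  have h : ∀ t : ℝ, e (k * t) = Complex.exp (↑(2 * π * k * t) * I) := fun t => by
    rw [e]; push_cast; ring_nf
  simp_rw [h]
  rw [intervalIntegral.integral_comp_mul_left (fun t : ℝ => Complex.exp (t * I)) hc, mul_neg,
    integral_exp_mul_I_eq_sinc, weight, Complex.real_smul]
  push_cast
  field_simp

lemma le_weight (k : ℤ) {ρ : ℝ} (hρ : 0 ≤ ρ) (hk : 4 * |(k : ℝ)| * ρ ≤ 1) : ρ ≤ weight k ρ := by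
  have hsinc : 2 / π ≤ sinc (2 * π * k * ρ) := two_div_pi_le_sinc <| by
    rw [abs_mul, abs_mul, abs_of_pos two_pi_pos, abs_of_nonneg hρ]
    nlinarith [pi_pos]
  have hπ : 1 / 2 ≤ 2 / π := by rw [div_le_div_iff₀ two_pos pi_pos]; linarith [pi_le_four]
  unfold weight
  nlinarith

lemma sq_le_weight_mul_weight (n : ℤ × ℤ) {ρ : ℝ} (hρ : 0 ≤ ρ)
    (hn : 4 * |(n.1 : ℝ)| * ρ ≤ 1 ∧ 4 * |(n.2 : ℝ)| * ρ ≤ 1) :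
    ρ ^ 2 ≤ weight n.1 ρ * weight n.2 ρ := by
  have h₁ := le_weight n.1 hρ hn.1
  have h₂ := le_weight n.2 hρ hn.2
  nlinarith

lemma integral_e_mul_Ioc_centered (k : ℤ) (p : ℝ) {ρ : ℝ} (hρ : 0 ≤ ρ) :
    ∫ t in Ioc (p - ρ) (p + ρ), e (k * t) = e (k * p) * weight k ρ := by
  rw [← intervalIntegral.integral_of_le (by linarith), ← integral_e_mul_eq_weight,
    ← intervalIntegral.integral_const_mul, sub_eq_neg_add, add_comm p,
    ← intervalIntegral.integral_comp_add_right]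
  exact intervalIntegral.integral_congr fun t _ => by rw [mul_add, e_add, mul_comm]

lemma integral_e_mul_Ioc_add_natCast (k : ℤ) (a : ℝ) (L : ℕ) :
    ∫ t in Ioc a (a + L), e (k * t) = if k = 0 then (L : ℂ) else 0 := by
  rw [← intervalIntegral.integral_of_le (by simp)]
  split_ifs with hk
  · simp [hk, e]
  have hc : 2 * π * I * k ≠ 0 := by simp [pi_ne_zero, hk, I_ne_zero]
  have h : ∀ t : ℝ, e (k * t) = Complex.exp (2 * π * I * k * t) := fun t => by
    rw [e]; push_cast; ring_nf
  simp_rw [h, integral_exp_mul_complex hc, ← h, mul_add, e_add]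
  norm_cast
  rw [e_intCast, mul_one, sub_self, zero_div]

lemma integral_e_dot_prod (n : ℤ × ℤ) (s t : Set ℝ) :
    ∫ y in s ×ˢ t, e (n.1 * y.1 + n.2 * y.2) =
      (∫ y in s, e (n.1 * y)) * ∫ y in t, e (n.2 * y) := by
  simp only [e_add]
  rw [Measure.volume_eq_prod]
  exact setIntegral_prod_mul (fun y => e (n.1 * y)) (fun y => e (n.2 * y)) s t

noncomputable def trigPoly (T : Finset (ℤ × ℤ)) (b : ℤ × ℤ → ℂ) (y : ℝ × ℝ) : ℂ :=
  ∑ n ∈ T, b n * e (n.1 * y.1 + n.2 * y.2)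

@[fun_prop]
lemma continuous_trigPoly (T : Finset (ℤ × ℤ)) (b : ℤ × ℤ → ℂ) : Continuous (trigPoly T b) := by
  unfold trigPoly; fun_prop

def box (p : ℝ × ℝ) (ρ : ℝ) : Set (ℝ × ℝ) := Ioc (p.1 - ρ) (p.1 + ρ) ×ˢ Ioc (p.2 - ρ) (p.2 + ρ)

lemma volume_real_box (p : ℝ × ℝ) {ρ : ℝ} (hρ : 0 ≤ ρ) : volume.real (box p ρ) = (2 * ρ) ^ 2 := by
  rw [box, Measure.real, Measure.volume_eq_prod, Measure.prod_prod, Real.volume_Ioc,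
    Real.volume_Ioc, ← ENNReal.ofReal_mul (by linarith), ENNReal.toReal_ofReal (by nlinarith)]
  ring

lemma volume_box_ne_top (p : ℝ × ℝ) (ρ : ℝ) : volume (box p ρ) ≠ ⊤ := by
  rw [box, Measure.volume_eq_prod, Measure.prod_prod, Real.volume_Ioc, Real.volume_Ioc]
  exact ENNReal.mul_ne_top ENNReal.ofReal_ne_top ENNReal.ofReal_ne_top

lemma integral_trigPoly_box (T : Finset (ℤ × ℤ)) (b : ℤ × ℤ → ℂ) (p : ℝ × ℝ) {ρ : ℝ}
    (hρ : 0 ≤ ρ) :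
    ∫ y in box p ρ, trigPoly T b y =
      trigPoly T (fun n => b n * (weight n.1 ρ * weight n.2 ρ)) p := by
  unfold trigPoly
  rw [integral_finsetSum _ fun n _ => by
    exact (by fun_prop : Continuous _).integrableOn_Ioc_prod_Ioc _ _ _ _]
  refine sum_congr rfl fun n _ => ?_
  rw [integral_const_mul, box, integral_e_dot_prod, integral_e_mul_Ioc_centered _ _ hρ,
    integral_e_mul_Ioc_centered _ _ hρ, e_add]
  ring

lemma integral_e_dot_Ioc_prod_Ioc_add_natCast (n : ℤ × ℤ) (a c : ℝ) (L₁ L₂ : ℕ) :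
    ∫ y in Ioc a (a + L₁) ×ˢ Ioc c (c + L₂), e (n.1 * y.1 + n.2 * y.2) =
      if n = 0 then (L₁ * L₂ : ℂ) else 0 := by
  rw [integral_e_dot_prod, integral_e_mul_Ioc_add_natCast, integral_e_mul_Ioc_add_natCast]
  rcases n with ⟨n₁, n₂⟩
  by_cases h₁ : n₁ = 0 <;> by_cases h₂ : n₂ = 0 <;> simp [h₁, h₂]

lemma ofReal_norm_sq_trigPoly (T : Finset (ℤ × ℤ)) (b : ℤ × ℤ → ℂ) (y : ℝ × ℝ) :
    ((‖trigPoly T b y‖ ^ 2 : ℝ) : ℂ) =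
      ∑ n ∈ T, ∑ m ∈ T, b n * conj (b m) * e ((n - m).1 * y.1 + (n - m).2 * y.2) := by
  push_cast
  rw [← mul_conj', trigPoly, map_sum, sum_mul_sum]
  refine sum_congr rfl fun n _ => sum_congr rfl fun m _ => ?_
  rw [map_mul, conj_e, mul_mul_mul_comm, ← e_add, Prod.fst_sub, Prod.snd_sub]
  push_cast; ring_nf

lemma integral_norm_sq_trigPoly (T : Finset (ℤ × ℤ)) (b : ℤ × ℤ → ℂ) (a c : ℝ) (L₁ L₂ : ℕ) :
    ∫ y in Ioc a (a + L₁) ×ˢ Ioc c (c + L₂), ‖trigPoly T b y‖ ^ 2 =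
      L₁ * L₂ * ∑ n ∈ T, ‖b n‖ ^ 2 := by
  apply ofReal_injective
  have hint : ∀ n m : ℤ × ℤ, IntegrableOn (fun y : ℝ × ℝ =>
      b n * conj (b m) * e ((n - m).1 * y.1 + (n - m).2 * y.2))
        (Ioc a (a + L₁) ×ˢ Ioc c (c + L₂)) :=
    fun n m => (by fun_prop : Continuous _).integrableOn_Ioc_prod_Ioc _ _ _ _
  rw [← integral_complex_ofReal]
  simp_rw [ofReal_norm_sq_trigPoly]
  rw [integral_finsetSum _ fun n _ => integrable_finsetSum _ fun m _ => hint n m]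
  simp_rw [integral_finsetSum _ fun m _ => hint _ m, integral_const_mul,
    integral_e_dot_Ioc_prod_Ioc_add_natCast, sub_eq_zero, mul_ite, mul_zero, sum_ite_eq,
    sum_ite_mem, Finset.inter_self, mul_conj']
  push_cast
  rw [mul_sum]
  exact sum_congr rfl fun n _ => by ring

open scoped Classical in
theorem sum_norm_sq_trigPoly_le {ι : Type*} (s : Finset ι) (T : Finset (ℤ × ℤ))
    (a : ℤ × ℤ → ℂ) (c : ι → ℝ × ℝ) {ρ : ℝ} (hρ : 0 < ρ)
    (hT : ∀ n ∈ T, 4 * |(n.1 : ℝ)| * ρ ≤ 1 ∧ 4 * |(n.2 : ℝ)| * ρ ≤ 1)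
    {a₁ a₂ : ℝ} {L₁ L₂ : ℕ} (hc : ∀ i ∈ s, box (c i) ρ ⊆ Ioc a₁ (a₁ + L₁) ×ˢ Ioc a₂ (a₂ + L₂))
    {K : ℕ} (hK : ∀ y, #{i ∈ s | y ∈ box (c i) ρ} ≤ K) :
    ∑ i ∈ s, ‖trigPoly T a (c i)‖ ^ 2 ≤ 4 * L₁ * L₂ * K / ρ ^ 2 * ∑ n ∈ T, ‖a n‖ ^ 2 := by
  set W : ℤ × ℤ → ℝ := fun n => weight n.1 ρ * weight n.2 ρ
  set b : ℤ × ℤ → ℂ := fun n => a n / W n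
  have hW : ∀ n ∈ T, ρ ^ 2 ≤ W n := fun n hn => sq_le_weight_mul_weight n hρ.le (hT n hn)
  have hb : ∀ n ∈ T, ‖b n‖ ^ 2 ≤ ‖a n‖ ^ 2 / ρ ^ 4 := fun n hn => by
    have hWpos : 0 < W n := lt_of_lt_of_le (by positivity) (hW n hn)
    rw [norm_div, norm_real, Real.norm_of_nonneg hWpos.le, div_pow]
    gcongr
    nlinarith [hW n hn]
  have hrepr : ∀ i, trigPoly T a (c i) = ∫ y in box (c i) ρ, trigPoly T b y := fun i => by
    rw [integral_trigPoly_box _ _ _ hρ.le]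
    refine sum_congr rfl fun n hn => ?_
    have hWpos : 0 < W n := lt_of_lt_of_le (by positivity) (hW n hn)
    push_cast [b, W]
    rw [div_mul_cancel₀]
    exact_mod_cast hWpos.ne'
  have hcs : ∀ i, ‖trigPoly T a (c i)‖ ^ 2 ≤
      (2 * ρ) ^ 2 * ∫ y in box (c i) ρ, ‖trigPoly T b y‖ ^ 2 := fun i => by
    rw [hrepr, ← volume_real_box (c i) hρ.le]
    exact norm_setIntegral_sq_le (volume_box_ne_top _ _)
      ((by fun_prop : Continuous _).integrableOn_Ioc_prod_Ioc _ _ _ _)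
      ((by fun_prop : Continuous _).integrableOn_Ioc_prod_Ioc _ _ _ _)
  have hoverlap : ∑ i ∈ s, ∫ y in box (c i) ρ, ‖trigPoly T b y‖ ^ 2 ≤
      K * ∫ y in Ioc a₁ (a₁ + L₁) ×ˢ Ioc a₂ (a₂ + L₂), ‖trigPoly T b y‖ ^ 2 :=
    sum_setIntegral_le_card_mul_setIntegral s (fun i _ => measurableSet_Ioc.prod measurableSet_Ioc)
      hc (fun y _ => hK y) (fun y _ => by positivity)
      ((by fun_prop : Continuous _).integrableOn_Ioc_prod_Ioc _ _ _ _)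
      (measurableSet_Ioc.prod measurableSet_Ioc)
  rw [integral_norm_sq_trigPoly] at hoverlap
  calc ∑ i ∈ s, ‖trigPoly T a (c i)‖ ^ 2
      ≤ (2 * ρ) ^ 2 * ∑ i ∈ s, ∫ y in box (c i) ρ, ‖trigPoly T b y‖ ^ 2 := by
        rw [mul_sum]; exact sum_le_sum fun i _ => hcs i
    _ ≤ (2 * ρ) ^ 2 * (K * (L₁ * L₂ * ∑ n ∈ T, ‖a n‖ ^ 2 / ρ ^ 4)) := by
        gcongr
        exact hoverlap.trans (by gcongr with n hn; exact hb n hn)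
    _ = 4 * L₁ * L₂ * K / ρ ^ 2 * ∑ n ∈ T, ‖a n‖ ^ 2 := by
        rw [← sum_div]; field_simp; ring

lemma trigPoly_fract (T : Finset (ℤ × ℤ)) (a : ℤ × ℤ → ℂ) (x₁ x₂ : ℝ) :
    trigPoly T a (Int.fract x₁, Int.fract x₂) = trigPoly T a (x₁, x₂) := by
  refine sum_congr rfl fun n _ => ?_
  have h : (n.1 : ℝ) * Int.fract x₁ + n.2 * Int.fract x₂ =
      n.1 * x₁ + n.2 * x₂ + ((-(n.1 * ⌊x₁⌋ + n.2 * ⌊x₂⌋) : ℤ) : ℝ) := by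
    simp only [Int.fract]; push_cast; ring
  rw [h, e_add, e_intCast, mul_one]

lemma box_fract_subset (x₁ x₂ : ℝ) {ρ : ℝ} (hρ : ρ ≤ 1 / 2) :
    box (Int.fract x₁, Int.fract x₂) ρ ⊆
      Ioc (-1 / 2 : ℝ) (-1 / 2 + (2 : ℕ)) ×ˢ Ioc (-1 / 2 : ℝ) (-1 / 2 + (2 : ℕ)) := by
  have h₁ := Int.fract_nonneg x₁; have h₂ := Int.fract_lt_one x₁
  have h₃ := Int.fract_nonneg x₂; have h₄ := Int.fract_lt_one x₂
  refine prod_mono (Ioc_subset_Ioc ?_ ?_) (Ioc_subset_Ioc ?_ ?_) <;> dsimp only <;> norm_num <;>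
    linarith

lemma abs_le_sqrt_of_sq_add_sq_le {n : ℤ × ℤ} {N : ℕ} (h : n.1 ^ 2 + n.2 ^ 2 ≤ (N : ℤ)) :
    |(n.1 : ℝ)| ≤ √N ∧ |(n.2 : ℝ)| ≤ √N := by
  constructor <;> apply Real.abs_le_sqrt <;> exact_mod_cast (by nlinarith)

lemma exists_radius {N : ℕ} (hN : 1 ≤ N) {Δ : ℝ} (hΔ : 0 < Δ) :
    ∃ ρ : ℝ, 0 < ρ ∧ ρ ≤ 1 / 2 ∧ 2 * ρ ^ 2 ≤ Δ ∧ 4 * √N * ρ ≤ 1 ∧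
      1 / ρ ^ 2 ≤ 16 * (N + Δ⁻¹) := by
  have hsN : 1 ≤ √(N : ℝ) := Real.one_le_sqrt.2 (by exact_mod_cast hN)
  set ρ := min √(Δ / 2) (1 / (4 * √N))
  have hρ : 0 < ρ := lt_min (Real.sqrt_pos.2 (by positivity)) (by positivity)
  have hρΔ : ρ ^ 2 ≤ Δ / 2 :=
    (pow_le_pow_left₀ hρ.le (min_le_left _ _) 2).trans (Real.sq_sqrt (by positivity)).le
  have hρN : 4 * √N * ρ ≤ 1 := by
    have := mul_le_mul_of_nonneg_left (min_le_right √(Δ / 2) (1 / (4 * √N)))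
      (by positivity : (0 : ℝ) ≤ 4 * √N)
    rwa [mul_one_div_cancel (by positivity)] at this
  refine ⟨ρ, hρ, by nlinarith, by linarith, hρN, ?_⟩
  have hN₀ : 0 ≤ (N : ℝ) := N.cast_nonneg
  have hΔ₀ : 0 ≤ Δ⁻¹ := inv_nonneg.2 hΔ.le
  obtain h | h : ρ = √(Δ / 2) ∨ ρ = 1 / (4 * √N) := min_choice _ _ <;> rw [h]
  · rw [Real.sq_sqrt (by positivity), one_div_div, div_eq_mul_inv]; linarith
  · rw [div_pow, one_pow, mul_pow, Real.sq_sqrt hN₀, one_div_one_div]; linarith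

open scoped Classical in
lemma card_mem_box_fract_le {ι : Type*} [Fintype ι] (x : ι → EuclideanSpace ℝ (Fin 2)) {ρ Δ : ℝ}
    (hρΔ : 2 * ρ ^ 2 ≤ Δ) {K : ℕ} (hK : ∀ α : EuclideanSpace ℝ (Fin 2), Nat.card {r : ι //
      ∃ z : ℤ × ℤ, ‖x r - α - (WithLp.equiv 2 (Fin 2 → ℝ)).symm ![(z.1 : ℝ), (z.2 : ℝ)]‖ ≤ √Δ} ≤ K)
    (y : ℝ × ℝ) : #{r | y ∈ box (Int.fract (x r 0), Int.fract (x r 1)) ρ} ≤ K := by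
  refine le_trans ?_ (hK ((WithLp.equiv 2 (Fin 2 → ℝ)).symm ![y.1, y.2]))
  rw [Nat.card_eq_fintype_card, Fintype.card_subtype]
  refine card_le_card fun r hr => ?_
  simp only [Finset.mem_filter, Finset.mem_univ, true_and, box, mem_prod, Set.mem_Ioc] at hr ⊢
  refine ⟨(⌊x r 0⌋, ⌊x r 1⌋), ?_⟩
  rw [EuclideanSpace.norm_eq, Fin.sum_univ_two]
  apply Real.sqrt_le_sqrt
  simp only [Int.fract] at hr
  simp only [Fin.isValue, WithLp.equiv_symm_apply, PiLp.sub_apply, Matrix.cons_val_zero,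
    norm_eq_abs, sq_abs, Matrix.cons_val_one, Matrix.cons_val_fin_one]
  nlinarith

end LargeSieve

open LargeSieve in
/-- Large sieve inequality for ℝ². -/
theorem large_sieve_R2 :
    ∃ C : ℝ, 0 < C ∧
      ∀ (R N : ℕ), 2 ≤ N →
      ∀ (x : Fin R → EuclideanSpace ℝ (Fin 2)) (a : ℤ × ℤ → ℂ) (Δ : ℝ),
        0 < Δ → Δ ≤ 1 / 2 →
      ∀ (T : Finset (ℤ × ℤ)), (∀ n : ℤ × ℤ, n ∈ T ↔ n.1 ^ 2 + n.2 ^ 2 ≤ (N : ℤ)) →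
      ∀ K : ℕ,
        (∀ α : EuclideanSpace ℝ (Fin 2),
          Nat.card {r : Fin R // ∃ z : ℤ × ℤ,
            ‖x r - α - ((WithLp.equiv 2 (Fin 2 → ℝ)).symm ![(z.1 : ℝ), (z.2 : ℝ)])‖ ≤ Real.sqrt Δ} ≤ K) →
        ∑ r : Fin R,
            ‖∑ n ∈ T, a n * Complex.exp (2 * π * Complex.I * ((n.1 : ℝ) * x r 0 + (n.2 : ℝ) * x r 1))‖ ^ 2
          ≤ C * K * ((N : ℝ) + Δ⁻¹) * ∑ n ∈ T, ‖a n‖ ^ 2 := by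
  refine ⟨256, by norm_num, fun R N hN x a Δ hΔ _ T hT K hK => ?_⟩
  obtain ⟨ρ, hρ, hρ₁, hρΔ, hρN, hρinv⟩ := exists_radius (by omega : 1 ≤ N) hΔ
  have hfreq : ∀ n ∈ T, 4 * |(n.1 : ℝ)| * ρ ≤ 1 ∧ 4 * |(n.2 : ℝ)| * ρ ≤ 1 := fun n hn => by
    obtain ⟨h₁, h₂⟩ := abs_le_sqrt_of_sq_add_sq_le ((hT n).1 hn)
    constructor <;> nlinarith
  have hsum : ∀ r, ∑ n ∈ T, a n *
      Complex.exp (2 * π * Complex.I * ((n.1 : ℝ) * x r 0 + (n.2 : ℝ) * x r 1)) =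
        trigPoly T a (Int.fract (x r 0), Int.fract (x r 1)) := fun r => by
    rw [trigPoly_fract, trigPoly]; push_cast [e]; rfl
  have key := sum_norm_sq_trigPoly_le univ T a _ hρ hfreq
    (fun r _ => box_fract_subset (x r 0) (x r 1) hρ₁) (card_mem_box_fract_le x hρΔ hK)
  simp_rw [hsum]
  refine key.trans (mul_le_mul_of_nonneg_right ?_ (sum_nonneg fun n _ => by positivity))
  calc 4 * ((2 : ℕ) : ℝ) * ((2 : ℕ) : ℝ) * K / ρ ^ 2 = 16 * K * (1 / ρ ^ 2) := by push_cast; ring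
    _ ≤ 16 * K * (16 * (N + Δ⁻¹)) := by gcongr
    _ = 256 * K * (N + Δ⁻¹) := by ring
end

section
/- Let q ∈ ℤ[i]\{0\}, N ∈ ℕ, and (a_n)_{n ∈ ℤ[i]} complex numbers. Then ∑_{a mod q², (a,q)=1} |∑_{n ∈ ℤ[i], N(n) ≤ N} a_n e(Re(na/q²))|² ≪ (N + N(q)²) · ∑_{N(n) ≤ N} |a_n|², with an absolute implied constant. -/
/-!
Completing the sum over reduced residues to all residues `x` mod `Q = q²`, the phases
`b ↦ e(Re(n b / Q))` become additive characters `ψₙ` of the finite group `ℤ[i]/(Q)`. Orthogonality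
of characters turns `∑ₓ |∑ₙ aₙ ψₙ(x)|²` into `#(ℤ[i]/(Q)) · ∑_{ψₘ = ψₙ} aₙ conj aₘ`, and
`ψₘ = ψₙ` forces `Q ∣ n - m`. Since `#(ℤ[i]/(Q)) ≪ N(Q)` and each `n` with `N(n) ≤ N` has
`≪ 1 + N/N(Q)` such partners `m`, the bound is `≪ N(Q) (1 + N/N(Q)) = N(Q) + N`.
-/

open Complex Real GaussianInt ComplexConjugate Finset

theorem AddChar.sum_mul_conj_eq_ite {G : Type*} [AddCommGroup G] [Fintype G]
    (ψ χ : AddChar G ℂ) [Decidable (ψ = χ)] :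
    ∑ x, ψ x * conj (χ x) = if ψ = χ then (Fintype.card G : ℂ) else 0 := by
  simp_rw [← AddChar.map_neg_eq_conj, ← AddChar.sub_apply, AddChar.sum_eq_ite, sub_eq_zero]

theorem Complex.two_mul_re_mul_conj_le (z w : ℂ) : 2 * (z * conj w).re ≤ ‖z‖ ^ 2 + ‖w‖ ^ 2 := by
  have := normSq_nonneg (z - w)
  rw [normSq_sub, normSq_eq_norm_sq, normSq_eq_norm_sq] at this
  linarith

theorem re_sum_sum_filter_mul_conj_le {ι β : Type*} [DecidableEq β] (f : ι → β) (T : Finset ι)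
    (a : ι → ℂ) (K : ℕ) (hK : ∀ n ∈ T, #{m ∈ T | f n = f m} ≤ K) :
    (∑ n ∈ T, ∑ m ∈ T with f n = f m, a n * conj (a m)).re ≤ K * ∑ n ∈ T, ‖a n‖ ^ 2 := by
  have hsymm : ∑ n ∈ T, ∑ m ∈ T with f n = f m, ‖a m‖ ^ 2
      = ∑ n ∈ T, ∑ m ∈ T with f n = f m, ‖a n‖ ^ 2 :=
    sum_comm' fun n m ↦ by simp only [mem_filter]; grind
  calc (∑ n ∈ T, ∑ m ∈ T with f n = f m, a n * conj (a m)).re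
      ≤ ∑ n ∈ T, ∑ m ∈ T with f n = f m, (‖a n‖ ^ 2 + ‖a m‖ ^ 2) / 2 := by
        simp only [Complex.re_sum]
        gcongr with n _ m _
        linarith [two_mul_re_mul_conj_le (a n) (a m)]
    _ = ∑ n ∈ T, ∑ m ∈ T with f n = f m, ‖a n‖ ^ 2 := by
        simp only [← sum_div, sum_add_distrib, hsymm, add_self_div_two]
    _ = ∑ n ∈ T, #{m ∈ T | f n = f m} * ‖a n‖ ^ 2 := by
        simp only [sum_const, nsmul_eq_mul]
    _ ≤ ∑ n ∈ T, K * ‖a n‖ ^ 2 := by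
        gcongr with n hn
        exact_mod_cast hK n hn
    _ = K * ∑ n ∈ T, ‖a n‖ ^ 2 := (mul_sum ..).symm

theorem AddChar.sum_norm_sq_sum_le {G ι : Type*} [AddCommGroup G] [Fintype G]
    (ψ : ι → AddChar G ℂ) (T : Finset ι) (a : ι → ℂ) (K : ℕ)
    (hK : ∀ n ∈ T, #{m ∈ T | ψ n = ψ m} ≤ K) :
    ∑ x, ‖∑ n ∈ T, a n * ψ n x‖ ^ 2 ≤ Fintype.card G * K * ∑ n ∈ T, ‖a n‖ ^ 2 := by
  classical
  have hexpand : ∑ x, (∑ n ∈ T, a n * ψ n x) * conj (∑ n ∈ T, a n * ψ n x)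
      = Fintype.card G * ∑ n ∈ T, ∑ m ∈ T with ψ n = ψ m, a n * conj (a m) := by
    simp_rw [map_sum, map_mul, sum_mul_sum, sum_filter]
    rw [Finset.sum_comm, mul_sum]
    refine sum_congr rfl fun n _ ↦ ?_
    rw [Finset.sum_comm, mul_sum]
    refine sum_congr rfl fun m _ ↦ ?_
    rw [sum_congr rfl fun x _ ↦ mul_mul_mul_comm (a n) (ψ n x) _ _, ← mul_sum,
      sum_mul_conj_eq_ite, mul_ite, mul_ite, mul_zero, mul_zero, mul_comm]
  calc ∑ x, ‖∑ n ∈ T, a n * ψ n x‖ ^ 2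
      = (Fintype.card G : ℝ) * (∑ n ∈ T, ∑ m ∈ T with ψ n = ψ m, a n * conj (a m)).re := by
        rw [← re_ofReal_mul, ofReal_natCast, ← hexpand, Complex.re_sum]
        simp_rw [mul_conj, ← normSq_eq_norm_sq, ofReal_re]
    _ ≤ Fintype.card G * (K * ∑ n ∈ T, ‖a n‖ ^ 2) := by
        gcongr
        exact re_sum_sum_filter_mul_conj_le ψ T a K hK
    _ = Fintype.card G * K * ∑ n ∈ T, ‖a n‖ ^ 2 := by ring

theorem Int.natAbs_le_sqrt_of_mul_self_le {x : ℤ} {M : ℕ} (h : x * x ≤ M) :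
    x.natAbs ≤ M.sqrt :=
  Nat.le_sqrt.mpr (by have := Int.natAbs_mul_self (a := x); omega)

theorem Complex.exists_intCast_eq_of_exp_eq_one {r : ℝ} (h : exp (2 * π * I * r) = 1) :
    ∃ k : ℤ, r = k := by
  obtain ⟨k, hk⟩ := exp_eq_one_iff.mp h
  have h2pi : (2 * π * I : ℂ) ≠ 0 := by simp [Real.pi_ne_zero, I_ne_zero]
  exact ⟨k, by exact_mod_cast mul_left_cancel₀ h2pi (hk.trans (mul_comm _ _))⟩

namespace GaussianInt

noncomputable def addChar (Q n : GaussianInt) : AddChar GaussianInt ℂ where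
  toFun b := exp (2 * π * I * ((n * b / Q : ℂ).re : ℝ))
  map_zero_eq_one' := by simp
  map_add_eq_mul' b c := by
    rw [← Complex.exp_add, toComplex_add, mul_add, add_div, add_re, ofReal_add, mul_add]

theorem addChar_apply (Q n b : GaussianInt) :
    addChar Q n b = exp (2 * π * I * ((n * b / Q : ℂ).re : ℝ)) := rfl

theorem addChar_comm (Q n b : GaussianInt) : addChar Q n b = addChar Q b n := by
  rw [addChar_apply, addChar_apply, mul_comm (n : ℂ)]

theorem addChar_eq_one_of_dvd {Q b : GaussianInt} (n : GaussianInt) (h : Q ∣ b) :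
    addChar Q n b = 1 := by
  obtain ⟨k, rfl⟩ := h
  rcases eq_or_ne Q 0 with rfl | hQ
  · simp
  rw [addChar_apply, toComplex_mul, mul_left_comm,
    mul_div_cancel_left₀ _ (toComplex_eq_zero.not.mpr hQ),
    ← toComplex_mul, ← GaussianInt.intCast_re, ofReal_intCast, mul_comm, exp_int_mul_two_pi_mul_I]

theorem dvd_of_forall_addChar_eq_one {Q n : GaussianInt} (hQ : Q ≠ 0)
    (h : ∀ b, addChar Q n b = 1) : Q ∣ n := by
  -- testing against `b = 1` and `b = i` shows that `Re (n / Q)` and `Im (n / Q)` are integers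
  obtain ⟨k, hk⟩ := exists_intCast_eq_of_exp_eq_one (h 1)
  obtain ⟨l, hl⟩ := exists_intCast_eq_of_exp_eq_one (h ⟨0, 1⟩)
  refine ⟨⟨k, -l⟩, toComplex_injective ?_⟩
  rw [toComplex_mul, mul_comm, ← div_eq_iff (toComplex_eq_zero.not.mpr hQ)]
  rw [toComplex_one, mul_one] at hk
  rw [show toComplex ⟨0, 1⟩ = I by simp [toComplex_def'], mul_div_right_comm, mul_I_re] at hl
  apply Complex.ext <;> simp [hk, ← hl]

-- The ring quotient `GaussianInt ⧸ Ideal.span {Q}` is definitionally the additive-group quotient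
-- by `(Ideal.span {Q}).toAddSubgroup`, so `QuotientAddGroup.lift` applies to it.
noncomputable def addCharQuot (Q n : GaussianInt) : AddChar (GaussianInt ⧸ Ideal.span {Q}) ℂ :=
  AddChar.toAddMonoidHomEquiv.symm <|
    QuotientAddGroup.lift (Ideal.span {Q}).toAddSubgroup (addChar Q n).toAddMonoidHom
      fun _ hb ↦ addChar_eq_one_of_dvd n (Ideal.mem_span_singleton.mp hb)

@[simp]
theorem addCharQuot_mk (Q n b : GaussianInt) :
    addCharQuot Q n (Ideal.Quotient.mk _ b) = addChar Q n b := rfl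

theorem dvd_sub_of_addCharQuot_eq {Q m n : GaussianInt} (hQ : Q ≠ 0)
    (h : addCharQuot Q n = addCharQuot Q m) : Q ∣ n - m := by
  refine dvd_of_forall_addChar_eq_one hQ fun b ↦ ?_
  have hb := congrArg (· (Ideal.Quotient.mk _ b)) h
  simp only [addCharQuot_mk] at hb
  rw [addChar_comm, AddChar.map_sub_eq_div, addChar_comm, addChar_comm Q b, ← hb,
    div_self (AddChar.val_isUnit _ _).ne_zero]

noncomputable def normBox (M : ℕ) : Finset GaussianInt :=
  (Icc (-(M.sqrt : ℤ)) M.sqrt ×ˢ Icc (-(M.sqrt : ℤ)) M.sqrt).map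
    ⟨fun p ↦ ⟨p.1, p.2⟩, fun _ _ h ↦ Prod.ext (congrArg Zsqrtd.re h) (congrArg Zsqrtd.im h)⟩

theorem mem_normBox_of_norm_le {z : GaussianInt} {M : ℕ} (h : z.norm ≤ M) : z ∈ normBox M := by
  rw [Zsqrtd.norm_def] at h
  have hre := Int.natAbs_le_sqrt_of_mul_self_le (x := z.re) (M := M)
    (by nlinarith [mul_self_nonneg z.im])
  have him := Int.natAbs_le_sqrt_of_mul_self_le (x := z.im) (M := M)
    (by nlinarith [mul_self_nonneg z.re])
  simp only [normBox, mem_map, mem_product, mem_Icc]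
  exact ⟨(z.re, z.im), by omega, rfl⟩

theorem card_normBox_le (M : ℕ) : #(normBox M) ≤ 8 * M + 1 := by
  have hsq : M.sqrt * M.sqrt ≤ M := Nat.sqrt_le M
  have hle : M.sqrt ≤ M.sqrt * M.sqrt := Nat.le_mul_self _
  simp only [normBox, card_map, card_product, Int.card_Icc]
  rw [show ((M.sqrt : ℤ) + 1 - -(M.sqrt : ℤ)).toNat = 2 * M.sqrt + 1 by omega]
  nlinarith

theorem norm_sub_le (m n : GaussianInt) : (m - n).norm ≤ 2 * m.norm + 2 * n.norm := by
  simp only [Zsqrtd.norm_def, Zsqrtd.re_sub, Zsqrtd.im_sub]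
  nlinarith [sq_nonneg (m.re + n.re), sq_nonneg (m.im + n.im)]

theorem surjective_mk_normBox {Q : GaussianInt} (hQ : Q ≠ 0) :
    Function.Surjective fun z : normBox Q.norm.natAbs ↦ Ideal.Quotient.mk (Ideal.span {Q}) z.1 := by
  intro x
  obtain ⟨r, rfl⟩ := Ideal.Quotient.mk_surjective x
  refine ⟨⟨r % Q, mem_normBox_of_norm_le ?_⟩, ?_⟩
  · rw [abs_natCast_norm]; exact (norm_mod_lt r hQ).le
  · show Ideal.Quotient.mk _ (r % Q) = _
    rw [Ideal.Quotient.eq, Ideal.mem_span_singleton, mod_def]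
    exact ⟨-(r / Q), by ring⟩

theorem finite_quotient_span_singleton {Q : GaussianInt} (hQ : Q ≠ 0) :
    Finite (GaussianInt ⧸ Ideal.span {Q}) :=
  Finite.of_surjective _ (surjective_mk_normBox hQ)

theorem natCard_quotient_span_singleton_le {Q : GaussianInt} (hQ : Q ≠ 0) :
    Nat.card (GaussianInt ⧸ Ideal.span {Q}) ≤ 8 * Q.norm.natAbs + 1 :=
  (Nat.card_le_card_of_surjective _ (surjective_mk_normBox hQ)).trans
    (by simpa using card_normBox_le _)

open scoped Classical in
theorem card_filter_dvd_sub_le {Q : GaussianInt} (hQ : Q ≠ 0) {M : ℕ} (S : Finset GaussianInt)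
    (hS : ∀ m ∈ S, m.norm ≤ M) {n : GaussianInt} (hn : n.norm ≤ M) :
    #{m ∈ S | Q ∣ n - m} ≤ 8 * (4 * M / Q.norm.natAbs) + 1 := by
  refine (card_le_card_of_injOn (fun m ↦ (n - m) / Q) (fun m hm ↦ ?_)
    fun m₁ h₁ m₂ h₂ h ↦ ?_).trans (card_normBox_le _)
  · obtain ⟨hmS, k, hk⟩ := mem_filter.mp hm
    simp only [hk, mul_div_cancel_left₀ _ hQ]
    apply mem_normBox_of_norm_le
    have hnorm : Q.norm * k.norm ≤ 4 * M := by
      rw [← Zsqrtd.norm_mul, ← hk]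
      linarith [norm_sub_le n m, hS m hmS]
    rw [← abs_natCast_norm k, ← abs_natCast_norm Q] at hnorm
    rw [← abs_natCast_norm k, Nat.cast_le,
      Nat.le_div_iff_mul_le (Int.natAbs_pos.mpr (norm_pos.mpr hQ).ne'), mul_comm]
    exact_mod_cast hnorm
  · obtain ⟨-, h₁⟩ := mem_filter.mp h₁
    obtain ⟨-, h₂⟩ := mem_filter.mp h₂
    rw [← sub_right_inj (a := n), ← EuclideanDomain.mul_div_cancel' hQ h₁,
      ← EuclideanDomain.mul_div_cancel' hQ h₂]
    exact congrArg (Q * ·) h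

theorem sum_norm_sq_sum_addChar_le {Q : GaussianInt} (hQ : Q ≠ 0) {N : ℕ} (a : GaussianInt → ℂ)
    (T : Finset GaussianInt) (hT : ∀ n ∈ T, n.norm ≤ N) (A : Finset GaussianInt)
    (hA : Set.InjOn (Ideal.Quotient.mk (Ideal.span {Q})) A) :
    ∑ b ∈ A, ‖∑ n ∈ T, a n * addChar Q n b‖ ^ 2
      ≤ 288 * ((N : ℝ) + Q.norm) * ∑ n ∈ T, ‖a n‖ ^ 2 := by
  classical
  have := finite_quotient_span_singleton hQ
  let := Fintype.ofFinite (GaussianInt ⧸ Ideal.span {Q})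
  have hK (n) (hn : n ∈ T) :
      #{m ∈ T | addCharQuot Q n = addCharQuot Q m} ≤ 8 * (4 * N / Q.norm.natAbs) + 1 :=
    (card_le_card (monotone_filter_right _ fun m _ h ↦ dvd_sub_of_addCharQuot_eq hQ h)).trans
      (card_filter_dvd_sub_le hQ T hT (hT n hn))
  have hcard : Fintype.card (GaussianInt ⧸ Ideal.span {Q}) * (8 * (4 * N / Q.norm.natAbs) + 1)
      ≤ 288 * (N + Q.norm.natAbs) := by
    have hc := natCard_quotient_span_singleton_le hQ
    have hP : 0 < Q.norm.natAbs := Int.natAbs_pos.mpr (norm_pos.mpr hQ).ne'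
    rw [Nat.card_eq_fintype_card] at hc
    generalize Fintype.card (GaussianInt ⧸ Ideal.span {Q}) = c at hc
    generalize Q.norm.natAbs = P at hc hP
    have := Nat.mul_le_mul_right (8 * (4 * N / P) + 1) hc
    have := Nat.div_mul_le_self (4 * N) P
    have := Nat.div_le_self (4 * N) P
    nlinarith
  calc ∑ b ∈ A, ‖∑ n ∈ T, a n * addChar Q n b‖ ^ 2
      = ∑ x ∈ A.image (Ideal.Quotient.mk _), ‖∑ n ∈ T, a n * addCharQuot Q n x‖ ^ 2 := by
        simp [sum_image hA]
    _ ≤ ∑ x, ‖∑ n ∈ T, a n * addCharQuot Q n x‖ ^ 2 :=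
        sum_le_univ_sum_of_nonneg fun _ ↦ sq_nonneg _
    _ ≤ Fintype.card (GaussianInt ⧸ Ideal.span {Q}) * (8 * (4 * N / Q.norm.natAbs) + 1 : ℕ)
          * ∑ n ∈ T, ‖a n‖ ^ 2 := AddChar.sum_norm_sq_sum_le _ T a _ hK
    _ ≤ 288 * ((N : ℝ) + Q.norm) * ∑ n ∈ T, ‖a n‖ ^ 2 := by
        gcongr ?_ * _
        rw [← natCast_natAbs_norm Q]
        exact_mod_cast hcard

end GaussianInt

/-- Single-modulus large sieve bound for square moduli in ℤ[i]. -/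
theorem single_modulus_square_large_sieve :
    ∃ C : ℝ, 0 < C ∧
      ∀ (q : GaussianInt), q ≠ 0 →
      ∀ (N : ℕ) (a : GaussianInt → ℂ),
      ∀ T : Finset GaussianInt, (∀ n : GaussianInt, n ∈ T ↔ Zsqrtd.norm n ≤ (N : ℤ)) →
      ∀ A : Finset GaussianInt,
        Set.BijOn (fun x => Ideal.Quotient.mk (Ideal.span {q ^ 2}) x) ↑A
          {x : GaussianInt ⧸ Ideal.span {q ^ 2} | IsUnit x} →
        ∑ b ∈ A,
            ‖∑ n ∈ T, a n * Complex.exp (2 * π * Complex.I *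
                ((GaussianInt.toComplex n * GaussianInt.toComplex b /
                  (GaussianInt.toComplex q) ^ 2).re : ℝ))‖ ^ 2
          ≤ C * ((N : ℝ) + ((Zsqrtd.norm q : ℤ) : ℝ) ^ 2) * ∑ n ∈ T, ‖a n‖ ^ 2 := by
  refine ⟨288, by norm_num, fun q hq N a T hT A hA ↦ ?_⟩
  have h := sum_norm_sq_sum_addChar_le (pow_ne_zero 2 hq) a T (fun n ↦ (hT n).mp) A hA.injOn
  simpa [addChar_apply, Zsqrtd.norm_mul, pow_two] using h
end

section
/- Let g ∈ ℤ[i]\{0\}, y ∈ ℂ with |y| > 0, and u > 0 with u ≤ |y|/2. For the principal branch of the square root (argument in (−π/2, π/2] after halving), every q ∈ ℂ with Re(q) ≥ 0, 0 ≤ arg(y/g) ≤ π/2 and |q² − y/g| ≤ u/|g| satisfies |q − √(y/g)| ≤ √2 · u / √(|y g|). -/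
open Complex Real GaussianInt

/-! The principal square root `s` of `w = y/g` satisfies `Re s = √((|w| + Re w)/2) ≥ √(|w|/2)`
once `Re w ≥ 0`, which is what `0 ≤ arg w ≤ π/2` gives. Hence if also `Re q ≥ 0`, then
`|q + s| ≥ Re (q + s) ≥ √(|w|/2)`, and the factorisation `q² − w = (q − s)(q + s)` turns the bound
on `|q² − w|` into one on `|q − s|`. -/

namespace Complex

theorem sqrt_norm_div_two_le_re_cpow_inv_two {w : ℂ} (hw : 0 ≤ w.re) :
    √(‖w‖ / 2) ≤ (w ^ (2⁻¹ : ℂ)).re := by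
  rw [cpow_inv_two_re]
  gcongr
  linarith

theorem norm_sub_cpow_inv_two_mul_le {q w : ℂ} (hq : 0 ≤ q.re) (hw : 0 ≤ w.re) :
    ‖q - w ^ (2⁻¹ : ℂ)‖ * √(‖w‖ / 2) ≤ ‖q ^ 2 - w‖ := by
  have hre := sqrt_norm_div_two_le_re_cpow_inv_two hw
  set s := w ^ (2⁻¹ : ℂ)
  have hs : s ^ 2 = w := by exact_mod_cast cpow_nat_inv_pow w two_ne_zero
  have hsum : √(‖w‖ / 2) ≤ ‖q + s‖ := calc
    √(‖w‖ / 2) ≤ (q + s).re := by rw [add_re]; linarith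
    _ ≤ ‖q + s‖ := re_le_norm _
  calc ‖q - s‖ * √(‖w‖ / 2) ≤ ‖q - s‖ * ‖q + s‖ := by gcongr
    _ = ‖q ^ 2 - w‖ := by rw [← norm_mul, ← hs]; ring_nf

end Complex

theorem close_to_sqrt_general (g : GaussianInt) (hg : g ≠ 0) (y : ℂ) (hy : 0 < ‖y‖)
    (u : ℝ) (q : ℂ) (hq : 0 ≤ q.re)
    (harg1 : 0 ≤ Complex.arg (y / GaussianInt.toComplex g))
    (harg2 : Complex.arg (y / GaussianInt.toComplex g) ≤ π / 2)
    (hball : ‖q ^ 2 - y / GaussianInt.toComplex g‖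
        ≤ u / ‖GaussianInt.toComplex g‖) :
    ‖q - (y / GaussianInt.toComplex g) ^ (1 / 2 : ℂ)‖
      ≤ Real.sqrt 2 * u / Real.sqrt ‖y * GaussianInt.toComplex g‖ := by
  have hgpos : 0 < ‖toComplex g‖ := norm_pos_iff.2 (fun h => hg (toComplex_eq_zero.1 h))
  have hre : 0 ≤ (y / toComplex g).re :=
    abs_arg_le_pi_div_two_iff.1 (abs_le.2 ⟨by linarith [pi_pos], harg2⟩)
  have hrhs : √2 * u / √‖y * toComplex g‖ = u / ‖toComplex g‖ / √(‖y / toComplex g‖ / 2) := by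
    rw [norm_mul, norm_div, Real.sqrt_div (by positivity), Real.sqrt_div hy.le,
      Real.sqrt_mul hy.le]
    field_simp
    rw [Real.sq_sqrt hgpos.le]
  rw [one_div, hrhs, le_div_iff₀ (by rw [norm_div]; positivity)]
  exact (norm_sub_cpow_inv_two_mul_le hq hre).trans hball

/-- If `Re q ≥ 0`, `0 ≤ arg(y/g) ≤ π/2` and `|q² − y/g| ≤ u/|g|` with `u ≤ |y|/2`, then
`q` is within `√2 u / √(|y g|)` of the principal square root of `y/g`. -/
theorem close_to_sqrt (g : GaussianInt) (hg : g ≠ 0) (y : ℂ) (hy : 0 < ‖y‖)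
    (u : ℝ) (hu : 0 < u) (hu2 : u ≤ ‖y‖ / 2) (q : ℂ) (hq : 0 ≤ q.re)
    (harg1 : 0 ≤ Complex.arg (y / GaussianInt.toComplex g))
    (harg2 : Complex.arg (y / GaussianInt.toComplex g) ≤ π / 2)
    (hball : ‖q ^ 2 - y / GaussianInt.toComplex g‖
        ≤ u / ‖GaussianInt.toComplex g‖) :
    ‖q - (y / GaussianInt.toComplex g) ^ (1 / 2 : ℂ)‖
      ≤ Real.sqrt 2 * u / Real.sqrt ‖y * GaussianInt.toComplex g‖ :=
  close_to_sqrt_general g hg y hy u q hq harg1 harg2 hball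
end
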